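/- For r odd, the r-th power of the path v_1...v_{2r} admits an acyclic vertex partition into (r+1)/2 parts given by {v_1,v_2,v_{r+2},v_{r+3}}, {v_3,v_4,v_{r+4},v_{r+5}}, ..., {v_{r−2},v_{r−1},v_{2r−1},v_{2r}}, {v_r,v_{r+1}}; consequently ar(P^r_{2r}) ≤ (r+1)/2. -/

import Mathlib

/-- The `r`-th power of a path on `ℓ` vertices: `v_i ~ v_j` iff `0 < |i - j| ≤ r`. -/
def pathPower (r ℓ : ℕ) : SimpleGraph (Fin ℓ) :=
  SimpleGraph.fromRel (fun i j => |(i : ℤ) - (j : ℤ)| ≤ r)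

/-- Vertex arboricity: least `t` such that the vertices can be partitioned into `t`
parts each inducing a forest. -/
noncomputable def arb {V : Type*} (H : SimpleGraph V) : ℕ :=
  sInf {t : ℕ | ∃ f : V → Fin t, ∀ i : Fin t, (H.induce {v | f v = i}).IsAcyclic}

/-- The explicit part assignment (for `r` odd), using the 1-based index `i = v + 1`:
vertices `v_r, v_{r+1}` go to the last part (index `(r-1)/2`), vertices
`v_1,...,v_{r-1}` are grouped in consecutive pairs `{v_{2j-1}, v_{2j}}` into part
`j - 1`, and vertices `v_{r+2},...,v_{2r}` are grouped in consecutive pairs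
`{v_{r+2j}, v_{r+2j+1}}` into part `j - 1`; this realizes the parts
`{v_1,v_2,v_{r+2},v_{r+3}}, ..., {v_{r-2},v_{r-1},v_{2r-1},v_{2r}}, {v_r,v_{r+1}}`. -/
def oddPart (r : ℕ) (v : Fin (2 * r)) : ℕ :=
  let i := v.val + 1
  if r ≤ i ∧ i ≤ r + 1 then (r - 1) / 2
  else if i < r then (i - 1) / 2
  else (i - r - 2) / 2

/-!
Part `t` of the partition consists of (some of) the vertices with 0-based indices
`2t, 2t + 1, 2t + r + 1, 2t + r + 2`; the middle part `{v_r, v_{r+1}}` is the case `2t = r - 1`,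
which is where `r` odd enters. In `P^r` two of these are adjacent only when they are consecutive
in this list, so each part induces a subgraph of a path on four vertices.
-/

open SimpleGraph

theorem SimpleGraph.pathGraph_isAcyclic (n : ℕ) : (pathGraph n).IsAcyclic := by
  refine isAcyclic_iff_forall_adj_isBridge.mpr fun v w hvw => ?_
  wlog hlt : v < w generalizing v w
  · rw [Sym2.eq_swap]
    exact this w v hvw.symm (by rw [pathGraph_adj] at hvw; omega)
  -- a walk avoiding the edge `v w` cannot leave `{u | u ≤ v}`
  rintro ⟨p⟩
  obtain ⟨⟨⟨x, y⟩, hxy⟩, -, hx, hy⟩ :=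
    p.exists_boundary_dart {u | u ≤ v} (show v ≤ v from le_rfl) hlt.not_ge
  simp only [Set.mem_ofPred_eq, not_le] at hx hy
  simp only [deleteEdges_adj, pathGraph_adj, Set.mem_singleton_iff, Sym2.eq_iff] at hxy hvw
  obtain ⟨hxy, hne⟩ := hxy
  exact hne (.inl ⟨Fin.ext (by omega), Fin.ext (by omega)⟩)

lemma pathPower_adj {r ℓ : ℕ} {u v : Fin ℓ} :
    (pathPower r ℓ).Adj u v ↔ u ≠ v ∧ (u : ℕ) ≤ v + r ∧ (v : ℕ) ≤ u + r := by
  simp only [pathPower, fromRel_adj, abs_sub_le_iff]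
  omega

theorem pathPower_induce_isAcyclic {r ℓ : ℕ} (a : ℕ) {S : Set (Fin ℓ)}
    (hS : ∀ v ∈ S,
      (v : ℕ) = a ∨ (v : ℕ) = a + 1 ∨ (v : ℕ) = a + r + 1 ∨ (v : ℕ) = a + r + 2) :
    ((pathPower r ℓ).induce S).IsAcyclic := by
  -- Only consecutive vertices of the sequence `a, a + 1, a + r + 1, a + r + 2` are within
  -- distance `r`, so the position in that sequence maps `S` into a path.
  let pos (v : S) : Fin 4 :=
    ⟨if (v : ℕ) ≤ a + 1 then v - a else v + 1 - a - r, by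
      have := hS v v.2; split_ifs <;> omega⟩
  have hpos : Function.Injective pos := fun v w h => by
    have := hS v v.2; have := hS w w.2
    simp only [pos, Fin.ext_iff] at h
    exact Subtype.ext (Fin.ext (by split_ifs at h <;> omega))
  refine (pathGraph_isAcyclic 4).comap ⟨pos, fun {v w} hvw => ?_⟩ hpos
  have := hS v v.2; have := hS w w.2
  simp only [comap_adj, Function.Embedding.subtype_apply, pathPower_adj] at hvw
  simp only [pathGraph_adj, pos]
  split_ifs <;> omega

lemma oddPart_lt (r : ℕ) (v : Fin (2 * r)) : oddPart r v < (r + 1) / 2 := by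
  have := v.isLt
  simp only [oddPart]
  split_ifs <;> omega

lemma val_of_oddPart_eq {r t : ℕ} (hr : Odd r) {v : Fin (2 * r)} (hv : oddPart r v = t) :
    (v : ℕ) = 2 * t ∨ (v : ℕ) = 2 * t + 1 ∨
      (v : ℕ) = 2 * t + r + 1 ∨ (v : ℕ) = 2 * t + r + 2 := by
  obtain ⟨k, rfl⟩ := hr
  simp only [oddPart] at hv
  split_ifs at hv <;> omega

lemma arb_le_of_forall_isAcyclic {V : Type*} (G : SimpleGraph V) (f : V → ℕ) {t : ℕ}
    (hf : ∀ v, f v < t) (hG : ∀ i, (G.induce {v | f v = i}).IsAcyclic) : arb G ≤ t :=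
  Nat.sInf_le ⟨fun v => ⟨f v, hf v⟩, fun i => by
    rw [show {v | (⟨f v, hf v⟩ : Fin t) = i} = {v | f v = i} from Set.ext fun _ => Fin.ext_iff]
    exact hG i⟩

theorem stmt18_general (r : ℕ) (hro : Odd r) :
    (∀ v : Fin (2 * r), oddPart r v < (r + 1) / 2) ∧
    (∀ t : ℕ, ((pathPower r (2 * r)).induce {v | oddPart r v = t}).IsAcyclic) ∧
    arb (pathPower r (2 * r)) ≤ (r + 1) / 2 := by
  have hparts (t : ℕ) : ((pathPower r (2 * r)).induce {v | oddPart r v = t}).IsAcyclic :=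
    pathPower_induce_isAcyclic (2 * t) fun _ hv => val_of_oddPart_eq hro hv
  exact ⟨oddPart_lt r, hparts, arb_le_of_forall_isAcyclic _ _ (oddPart_lt r) hparts⟩

/-- For `r` odd, the explicit partition into `(r+1)/2` parts is an acyclic partition of
the `r`-th power of the path on `2r` vertices; consequently `ar(P^r_{2r}) ≤ (r+1)/2`. -/
theorem stmt18 (r : ℕ) (hr : 3 ≤ r) (hro : Odd r) :
    (∀ v : Fin (2 * r), oddPart r v < (r + 1) / 2) ∧
    (∀ t : ℕ, ((pathPower r (2 * r)).induce {v | oddPart r v = t}).IsAcyclic) ∧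
    arb (pathPower r (2 * r)) ≤ (r + 1) / 2 :=
  stmt18_general r hro
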